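/- Fix δ ∈ (0,1), ε ∈ (0,2), and set c = 1 + 1/√(ln(|Ω|/δ)). Suppose every state-action pair in Ω is sampled uniformly (N i.i.d. next-state samples per pair, with P̂ the empirical estimate), and the total number of collected transition samples satisfies N·|Ω| ≥ (c² · |Ω| · |S^E| / ε²) · ln(|Ω|/δ). Then, with probability at least 1−δ, both of the following hold: (i) E_{(s,a)∼d^E}[ ||P(·|s,a) − P̂(·|s,a)||₁ ] ≤ ε, and (ii) for every reward parameter θ, |L(θ) − L̂(θ)| ≤ γ C_v ε/(1−γ), where C_v = (C_r + C_u + log|A|)/(1−γ). -/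

import Mathlib

open Real BigOperators Finset MeasureTheory
open scoped ProbabilityTheory

noncomputable section

/-- `P` is a transition kernel: each row `P s a ·` is a probability distribution. -/
def IsKernel {S A : Type} [Fintype S] (P : S → A → S → ℝ) : Prop :=
  (∀ s a s', 0 ≤ P s a s') ∧ ∀ s a, ∑ s', P s a s' = 1

/-- `p` is a policy: each `p s ·` is a probability distribution over actions. -/
def IsPolicy {S A : Type} [Fintype A] (p : S → A → ℝ) : Prop :=
  (∀ s a, 0 ≤ p s a) ∧ ∀ s, ∑ a, p s a = 1

/-- `η` is a probability distribution over states. -/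
def IsDist {S : Type} [Fintype S] (η : S → ℝ) : Prop :=
  (∀ s, 0 ≤ η s) ∧ ∑ s, η s = 1

/-- Distribution of the state at time `t` under initial distribution `η`,
policy `pol` and transition kernel `P`. -/
def stateDist {S A : Type} [Fintype S] [Fintype A]
    (P : S → A → S → ℝ) (pol : S → A → ℝ) (η : S → ℝ) : ℕ → S → ℝ
  | 0 => η
  | (t + 1) => fun s' => ∑ s, ∑ a, stateDist P pol η t s * pol s a * P s a s'

/-- `E_{τ ∼ (η, pol, P)} [ ∑_t γ^t f(s_t, a_t) ]`. -/
def discSum {S A : Type} [Fintype S] [Fintype A]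
    (γ : ℝ) (P : S → A → S → ℝ) (pol : S → A → ℝ) (η : S → ℝ) (f : S → A → ℝ) : ℝ :=
  ∑' t : ℕ, γ ^ t * ∑ s, ∑ a, stateDist P pol η t s * pol s a * f s a

/-- Discounted state-action visitation measure
`d(s,a) = (1-γ) pol(a|s) ∑_t γ^t Pr(s_t = s)`. -/
def visit {S A : Type} [Fintype S] [Fintype A]
    (γ : ℝ) (P : S → A → S → ℝ) (pol : S → A → ℝ) (η : S → ℝ) (s : S) (a : A) : ℝ :=
  (1 - γ) * pol s a * ∑' t : ℕ, γ ^ t * stateDist P pol η t s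

/-- Log-sum-exp soft value function `V(s) = log ∑_a exp Q(s,a)`. -/
def lse {S A : Type} [Fintype A] (Q : S → A → ℝ) (s : S) : ℝ :=
  Real.log (∑ a, Real.exp (Q s a))

/-- Softmax policy `π(a|s) = exp Q(s,a) / ∑_{a'} exp Q(s,a')`. -/
def softmax {S A : Type} [Fintype A] (Q : S → A → ℝ) (s : S) (a : A) : ℝ :=
  Real.exp (Q s a) / ∑ a', Real.exp (Q s a')

open scoped Classical in
/-- The expert-visited state-action pairs `Ω = {(s,a) : dᴱ(s,a) > 0}`. -/
def expertPairs {S A : Type} [Fintype S] [Fintype A]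
    (γ : ℝ) (P : S → A → S → ℝ) (pol : S → A → ℝ) (η : S → ℝ) : Finset (S × A) :=
  Finset.univ.filter fun p => 0 < visit γ P pol η p.1 p.2

open scoped Classical in
/-- The expert-visited states `Sᴱ = {s : ∑_a dᴱ(s,a) > 0}`. -/
def expertStates {S A : Type} [Fintype S] [Fintype A]
    (γ : ℝ) (P : S → A → S → ℝ) (pol : S → A → ℝ) (η : S → ℝ) : Finset S :=
  Finset.univ.filter fun s => 0 < ∑ a, visit γ P pol η s a

/-! ### Auxiliary lemmas -/

section Aux

variable {S A : Type} [Fintype S] [Fintype A]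
variable {γ : ℝ} {P : S → A → S → ℝ} {pol : S → A → ℝ} {η : S → ℝ}

lemma stateDist_nonneg (hP : IsKernel P) (hpol : IsPolicy pol) (hη : IsDist η) :
    ∀ t s, 0 ≤ stateDist P pol η t s := by
  intro t
  induction t with
  | zero => exact hη.1
  | succ t ih =>
    intro s'
    apply Finset.sum_nonneg; intro s _
    apply Finset.sum_nonneg; intro a _
    exact mul_nonneg (mul_nonneg (ih s) (hpol.1 s a)) (hP.1 s a s')

lemma stateDist_sum (hP : IsKernel P) (hpol : IsPolicy pol) (hη : IsDist η) :
    ∀ t, ∑ s, stateDist P pol η t s = 1 := by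
  intro t
  induction t with
  | zero => exact hη.2
  | succ t ih =>
    show ∑ s', ∑ s, ∑ a, stateDist P pol η t s * pol s a * P s a s' = 1
    rw [Finset.sum_comm]
    calc ∑ s, ∑ s', ∑ a, stateDist P pol η t s * pol s a * P s a s'
        = ∑ s, stateDist P pol η t s := by
          apply Finset.sum_congr rfl; intro s _
          rw [Finset.sum_comm]
          calc ∑ a, ∑ s', stateDist P pol η t s * pol s a * P s a s'
              = ∑ a, stateDist P pol η t s * pol s a := by
                apply Finset.sum_congr rfl; intro a _
                rw [← Finset.mul_sum, hP.2 s a, mul_one]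
            _ = stateDist P pol η t s := by rw [← Finset.mul_sum, hpol.2 s, mul_one]
      _ = 1 := ih

lemma stateDist_le_one (hP : IsKernel P) (hpol : IsPolicy pol) (hη : IsDist η) (t : ℕ) (s : S) :
    stateDist P pol η t s ≤ 1 := by
  rw [← stateDist_sum hP hpol hη t]
  exact Finset.single_le_sum (fun s _ => stateDist_nonneg hP hpol hη t s) (Finset.mem_univ s)

lemma summable_discSum (hγ : γ ∈ Set.Ioo (0:ℝ) 1) (hP : IsKernel P) (hpol : IsPolicy pol)
    (hη : IsDist η) (f : S → A → ℝ) :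
    Summable (fun t : ℕ => γ ^ t * ∑ s, ∑ a, stateDist P pol η t s * pol s a * f s a) := by
  obtain ⟨hγ0, hγ1⟩ := hγ
  have hsum : Summable (fun t : ℕ => γ ^ t * (∑ s, ∑ a, |f s a|)) :=
    (summable_geometric_of_lt_one hγ0.le hγ1).mul_right _
  refine Summable.of_norm_bounded hsum ?_
  intro t
  rw [Real.norm_eq_abs, abs_mul, abs_pow, abs_of_pos hγ0]
  apply mul_le_mul_of_nonneg_left _ (pow_nonneg hγ0.le t)
  calc |∑ s, ∑ a, stateDist P pol η t s * pol s a * f s a|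
      ≤ ∑ s, ∑ a, |stateDist P pol η t s * pol s a * f s a| := by
        refine (Finset.abs_sum_le_sum_abs _ _).trans ?_
        exact Finset.sum_le_sum fun s _ => Finset.abs_sum_le_sum_abs _ _
    _ ≤ ∑ s, ∑ a, |f s a| := by
        apply Finset.sum_le_sum; intro s _
        apply Finset.sum_le_sum; intro a _
        rw [abs_mul, abs_mul]
        have h1 : |stateDist P pol η t s| ≤ 1 := by
          rw [abs_of_nonneg (stateDist_nonneg hP hpol hη t s)]
          exact stateDist_le_one hP hpol hη t s
        have h2 : |pol s a| ≤ 1 := by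
          rw [abs_of_nonneg (hpol.1 s a)]
          rw [← hpol.2 s]
          exact Finset.single_le_sum (fun a _ => hpol.1 s a) (Finset.mem_univ a)
        calc |stateDist P pol η t s| * |pol s a| * |f s a|
            ≤ 1 * 1 * |f s a| := by
              apply mul_le_mul_of_nonneg_right _ (abs_nonneg _)
              exact mul_le_mul h1 h2 (abs_nonneg _) zero_le_one
          _ = |f s a| := by ring

lemma summable_stateDist (hγ : γ ∈ Set.Ioo (0:ℝ) 1) (hP : IsKernel P) (hpol : IsPolicy pol)
    (hη : IsDist η) (s : S) :
    Summable (fun t : ℕ => γ ^ t * stateDist P pol η t s) := by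
  obtain ⟨hγ0, hγ1⟩ := hγ
  refine Summable.of_norm_bounded (summable_geometric_of_lt_one hγ0.le hγ1) ?_
  intro t
  rw [Real.norm_eq_abs, abs_mul, abs_pow, abs_of_pos hγ0,
    abs_of_nonneg (stateDist_nonneg hP hpol hη t s)]
  calc γ ^ t * stateDist P pol η t s ≤ γ ^ t * 1 :=
        mul_le_mul_of_nonneg_left (stateDist_le_one hP hpol hη t s) (pow_nonneg hγ0.le t)
    _ = γ ^ t := mul_one _

lemma visit_nonneg (hγ : γ ∈ Set.Ioo (0:ℝ) 1) (hP : IsKernel P) (hpol : IsPolicy pol)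
    (hη : IsDist η) (s : S) (a : A) : 0 ≤ visit γ P pol η s a := by
  apply mul_nonneg (mul_nonneg (by linarith [hγ.2]) (hpol.1 s a))
  exact tsum_nonneg fun t => mul_nonneg (pow_nonneg hγ.1.le t) (stateDist_nonneg hP hpol hη t s)

/-- `∑_{s,a} d(s,a) f(s,a) = (1-γ) * discSum f`. -/
lemma sum_visit_mul (hγ : γ ∈ Set.Ioo (0:ℝ) 1) (hP : IsKernel P) (hpol : IsPolicy pol)
    (hη : IsDist η) (f : S → A → ℝ) :
    ∑ s, ∑ a, visit γ P pol η s a * f s a = (1 - γ) * discSum γ P pol η f := by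
  have hsummand : ∀ (s : S) (a : A), Summable
      (fun t : ℕ => (1 - γ) * (γ ^ t * (stateDist P pol η t s * pol s a * f s a))) := by
    intro s a
    have heq : (fun t : ℕ => (1 - γ) * (γ ^ t * (stateDist P pol η t s * pol s a * f s a)))
        = fun t => ((1 - γ) * (pol s a * f s a)) * (γ ^ t * stateDist P pol η t s) := by
      funext t; ring
    rw [heq]
    exact (summable_stateDist hγ hP hpol hη s).mul_left _
  have key : ∀ s a, visit γ P pol η s a * f s a
      = ∑' t : ℕ, (1 - γ) * (γ ^ t * (stateDist P pol η t s * pol s a * f s a)) := by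
    intro s a
    have heq : ∀ t : ℕ, (1 - γ) * (γ ^ t * (stateDist P pol η t s * pol s a * f s a))
        = ((1 - γ) * pol s a * f s a) * (γ ^ t * stateDist P pol η t s) := fun t => by ring
    rw [tsum_congr heq, tsum_mul_left, visit]
    ring
  calc ∑ s, ∑ a, visit γ P pol η s a * f s a
      = ∑ s, ∑ a, ∑' t : ℕ, (1 - γ) * (γ ^ t * (stateDist P pol η t s * pol s a * f s a)) :=
        Finset.sum_congr rfl fun s _ => Finset.sum_congr rfl fun a _ => key s a
    _ = ∑ s, ∑' t : ℕ, ∑ a, (1 - γ) * (γ ^ t * (stateDist P pol η t s * pol s a * f s a)) :=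
        Finset.sum_congr rfl fun s _ => (Summable.tsum_finsetSum fun a _ => hsummand s a).symm
    _ = ∑' t : ℕ, ∑ s, ∑ a, (1 - γ) * (γ ^ t * (stateDist P pol η t s * pol s a * f s a)) :=
        (Summable.tsum_finsetSum fun s _ => summable_sum fun a _ => hsummand s a).symm
    _ = ∑' t : ℕ, (1 - γ) * (γ ^ t * ∑ s, ∑ a, stateDist P pol η t s * pol s a * f s a) := by
        apply tsum_congr; intro t
        simp only [Finset.mul_sum]
    _ = (1 - γ) * discSum γ P pol η f := by rw [tsum_mul_left]; rfl

lemma sum_visit_eq_one (hγ : γ ∈ Set.Ioo (0:ℝ) 1) (hP : IsKernel P) (hpol : IsPolicy pol)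
    (hη : IsDist η) : ∑ s, ∑ a, visit γ P pol η s a = 1 := by
  have := sum_visit_mul hγ hP hpol hη (fun _ _ => 1)
  simp only [mul_one] at this
  rw [this, discSum]
  have hinner : ∀ t : ℕ, (∑ s, ∑ a, stateDist P pol η t s * pol s a * 1)
      = ∑ s, stateDist P pol η t s := by
    intro t
    simp only [mul_one]
    apply Finset.sum_congr rfl; intro s _
    rw [← Finset.mul_sum, hpol.2 s, mul_one]
  calc (1 - γ) * ∑' t : ℕ, γ ^ t * ∑ s, ∑ a, stateDist P pol η t s * pol s a * 1
      = (1 - γ) * ∑' t : ℕ, γ ^ t := by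
        congr 1
        apply tsum_congr; intro t
        rw [hinner t, stateDist_sum hP hpol hη t, mul_one]
    _ = 1 := by
        rw [tsum_geometric_of_lt_one hγ.1.le hγ.2]
        have h1γ : (1:ℝ) - γ ≠ 0 := by have := hγ.2; intro h; linarith [sub_eq_zero.mp h]
        field_simp

/-- The telescoping identity:
`discSum (fun s _ => W s) = ∑_s η s W s + γ * discSum (fun s a => ∑_{s'} P s a s' W s')`. -/
lemma discSum_telescope (hγ : γ ∈ Set.Ioo (0:ℝ) 1) (hP : IsKernel P) (hpol : IsPolicy pol)
    (hη : IsDist η) (W : S → ℝ) :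
    discSum γ P pol η (fun s _ => W s)
      = (∑ s, η s * W s) + γ * discSum γ P pol η (fun s a => ∑ s', P s a s' * W s') := by
  set Aseq : ℕ → ℝ := fun t => ∑ s, stateDist P pol η t s * W s with hA
  have h1 : ∀ t : ℕ, (∑ s, ∑ a, stateDist P pol η t s * pol s a * W s) = Aseq t := by
    intro t
    apply Finset.sum_congr rfl; intro s _
    have : ∀ a, stateDist P pol η t s * pol s a * W s
        = (stateDist P pol η t s * W s) * pol s a := fun a => by ring
    rw [funext this, ← Finset.mul_sum, hpol.2 s, mul_one]
  have h2 : ∀ t : ℕ, (∑ s, ∑ a, stateDist P pol η t s * pol s a * ∑ s', P s a s' * W s')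
      = Aseq (t + 1) := by
    intro t
    have expand : ∀ s a, stateDist P pol η t s * pol s a * ∑ s', P s a s' * W s'
        = ∑ s', stateDist P pol η t s * pol s a * P s a s' * W s' := by
      intro s a
      rw [Finset.mul_sum]
      apply Finset.sum_congr rfl; intro s' _; ring
    calc ∑ s, ∑ a, stateDist P pol η t s * pol s a * ∑ s', P s a s' * W s'
        = ∑ s, ∑ a, ∑ s', stateDist P pol η t s * pol s a * P s a s' * W s' := by
          exact Finset.sum_congr rfl fun s _ => Finset.sum_congr rfl fun a _ => expand s a
      _ = ∑ s', ∑ s, ∑ a, stateDist P pol η t s * pol s a * P s a s' * W s' := by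
          rw [show (∑ s, ∑ a, ∑ s', stateDist P pol η t s * pol s a * P s a s' * W s')
              = ∑ s, ∑ s', ∑ a, stateDist P pol η t s * pol s a * P s a s' * W s'
            from Finset.sum_congr rfl fun s _ => Finset.sum_comm ..]
          exact Finset.sum_comm ..
      _ = ∑ s', (∑ s, ∑ a, stateDist P pol η t s * pol s a * P s a s') * W s' := by
          simp only [Finset.sum_mul]
      _ = Aseq (t + 1) := rfl
  have hsum1 : Summable (fun t : ℕ => γ ^ t * Aseq t) := by
    have := summable_discSum hγ hP hpol hη (fun s (_ : A) => W s)
    simpa only [h1] using this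
  have hds1 : discSum γ P pol η (fun s _ => W s) = ∑' t : ℕ, γ ^ t * Aseq t := by
    rw [discSum]; exact tsum_congr fun t => by rw [h1]
  have hds2 : discSum γ P pol η (fun s a => ∑ s', P s a s' * W s')
      = ∑' t : ℕ, γ ^ t * Aseq (t + 1) := by
    rw [discSum]; exact tsum_congr fun t => by rw [h2]
  rw [hds1, hds2, hsum1.tsum_eq_zero_add]
  have hA0 : Aseq 0 = ∑ s, η s * W s := rfl
  have : ∀ t : ℕ, γ ^ (t + 1) * Aseq (t + 1) = γ * (γ ^ t * Aseq (t + 1)) := fun t => by ring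
  rw [funext this, tsum_mul_left, pow_zero, one_mul, hA0]

lemma sum_exp_pos [Nonempty A] (Q : S → A → ℝ) (s : S) : (0:ℝ) < ∑ a, Real.exp (Q s a) :=
  Finset.sum_pos (fun a _ => Real.exp_pos _) Finset.univ_nonempty

lemma abs_lse_le [Nonempty A] {Q : S → A → ℝ} {B : ℝ} (s : S) (hB : ∀ a, |Q s a| ≤ B) :
    |lse Q s| ≤ B + Real.log (Fintype.card A) := by
  have hcard : 1 ≤ (Fintype.card A : ℝ) := by exact_mod_cast Fintype.card_pos
  have hlog : 0 ≤ Real.log (Fintype.card A) := Real.log_nonneg hcard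
  obtain ⟨a₀⟩ := ‹Nonempty A›
  rw [abs_le]
  constructor
  · have hge : Real.exp (Q s a₀) ≤ ∑ a, Real.exp (Q s a) :=
      Finset.single_le_sum (fun a _ => (Real.exp_pos _).le) (Finset.mem_univ a₀)
    have hlge : Q s a₀ ≤ lse Q s := by
      have := Real.log_le_log (Real.exp_pos _) hge
      rwa [Real.log_exp] at this
    have := (abs_le.mp (hB a₀)).1
    unfold lse at hlge ⊢
    linarith
  · have hle : ∑ a, Real.exp (Q s a) ≤ (Fintype.card A : ℝ) * Real.exp B := by
      calc ∑ a, Real.exp (Q s a) ≤ ∑ _a : A, Real.exp B :=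
            Finset.sum_le_sum fun a _ => Real.exp_le_exp.mpr ((abs_le.mp (hB a)).2)
        _ = (Fintype.card A : ℝ) * Real.exp B := by
            rw [Finset.sum_const, nsmul_eq_mul, Finset.card_univ]
    have := Real.log_le_log (sum_exp_pos Q s) hle
    rw [Real.log_mul (by positivity) (Real.exp_ne_zero _), Real.log_exp] at this
    unfold lse
    linarith

lemma log_softmax [Nonempty A] (Q : S → A → ℝ) (s : S) (a : A) :
    Real.log (softmax Q s a) = Q s a - lse Q s := by
  rw [softmax, Real.log_div (Real.exp_ne_zero _) (ne_of_gt (sum_exp_pos Q s)), Real.log_exp, lse]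

/-- The deterministic part: the simulation-lemma bound on `|L(θ) - L̂(θ)|` given the
weighted model error bound. -/
lemma det_part [Nonempty S] [Nonempty A] (hγ : γ ∈ Set.Ioo (0:ℝ) 1) (hP : IsKernel P)
    (hpol : IsPolicy pol) (hη : IsDist η)
    (Ph : S → A → S → ℝ) (hPh : IsKernel Ph) (R : S → A → ℝ) {CR : ℝ} (hR : ∀ s a, |R s a| ≤ CR)
    (Q : S → A → ℝ) (hQ : ∀ s a, Q s a = R s a + γ * ∑ s', Ph s a s' * lse Q s')
    {ε : ℝ}
    (hcond : ∑ s, ∑ a, visit γ P pol η s a * ∑ s', |P s a s' - Ph s a s'| ≤ ε) :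
    |discSum γ P pol η (fun s a => Real.log (softmax Q s a)) -
        (discSum γ P pol η R - ∑ s, η s * lse Q s)| ≤
      γ * ((CR + Real.log (Fintype.card A)) / (1 - γ)) * ε / (1 - γ) := by
  have h1γ : 0 < 1 - γ := by have := hγ.2; linarith
  have hγ0 : (0:ℝ) < γ := hγ.1
  set V : S → ℝ := lse Q with hV
  set M : ℝ := Finset.univ.sup' Finset.univ_nonempty (fun s => |V s|) with hM
  have hVM : ∀ s, |V s| ≤ M := fun s =>
    Finset.le_sup' (fun s => |V s|) (Finset.mem_univ s)
  have hM0 : 0 ≤ M := le_trans (abs_nonneg _) (hVM (Classical.arbitrary S))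
  have habsPh : ∀ s a, |∑ s', Ph s a s' * V s'| ≤ M := by
    intro s a
    calc |∑ s', Ph s a s' * V s'| ≤ ∑ s', |Ph s a s' * V s'| := Finset.abs_sum_le_sum_abs _ _
      _ ≤ ∑ s', Ph s a s' * M := by
          apply Finset.sum_le_sum; intro s' _
          rw [abs_mul, abs_of_nonneg (hPh.1 s a s')]
          exact mul_le_mul_of_nonneg_left (hVM s') (hPh.1 s a s')
      _ = M := by rw [← Finset.sum_mul, hPh.2 s a, one_mul]
  have hQb : ∀ s a, |Q s a| ≤ CR + γ * M := by
    intro s a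
    rw [hQ s a]
    calc |R s a + γ * ∑ s', Ph s a s' * V s'|
        ≤ |R s a| + |γ * ∑ s', Ph s a s' * V s'| := abs_add_le _ _
      _ ≤ CR + γ * M := by
          rw [abs_mul, abs_of_pos hγ0]
          exact add_le_add (hR s a) (mul_le_mul_of_nonneg_left (habsPh s a) hγ0.le)
  have hVb : ∀ s, |V s| ≤ CR + γ * M + Real.log (Fintype.card A) :=
    fun s => abs_lse_le s (fun a => hQb s a)
  have hMle : M ≤ CR + γ * M + Real.log (Fintype.card A) :=
    Finset.sup'_le _ _ fun s _ => hVb s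
  set Cv : ℝ := (CR + Real.log (Fintype.card A)) / (1 - γ) with hCv
  have hMCv : M ≤ Cv := by rw [hCv, le_div_iff₀ h1γ]; nlinarith
  have hVCv : ∀ s, |V s| ≤ Cv := fun s => (hVM s).trans hMCv
  have hCv0 : 0 ≤ Cv := le_trans (abs_nonneg _) (hVCv (Classical.arbitrary S))
  -- key algebraic identity
  have e1 := sum_visit_mul hγ hP hpol hη (fun s a => Real.log (softmax Q s a))
  have e2 := sum_visit_mul hγ hP hpol hη R
  have e3 := sum_visit_mul hγ hP hpol hη (fun s a => ∑ s', P s a s' * V s')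
  have e5 := sum_visit_mul hγ hP hpol hη (fun s (_ : A) => V s)
  have e4 := discSum_telescope hγ hP hpol hη V
  have ePh := sum_visit_mul hγ hP hpol hη (fun s a => ∑ s', Ph s a s' * V s')
  have e6 : ∑ s, ∑ a, visit γ P pol η s a * V s
      = (1 - γ) * (∑ s, η s * V s)
        + γ * ∑ s, ∑ a, visit γ P pol η s a * (∑ s', P s a s' * V s') := by
    rw [e5, e4, e3]; ring
  have e7 : ∑ s, ∑ a, visit γ P pol η s a * Real.log (softmax Q s a)
      = (∑ s, ∑ a, visit γ P pol η s a * R s a)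
        + γ * (∑ s, ∑ a, visit γ P pol η s a * (∑ s', Ph s a s' * V s'))
        - ∑ s, ∑ a, visit γ P pol η s a * V s := by
    have hpt : ∀ s a, visit γ P pol η s a * Real.log (softmax Q s a)
        = visit γ P pol η s a * R s a
          + γ * (visit γ P pol η s a * (∑ s', Ph s a s' * V s'))
          - visit γ P pol η s a * V s := by
      intro s a
      rw [log_softmax, hQ s a]
      ring
    calc ∑ s, ∑ a, visit γ P pol η s a * Real.log (softmax Q s a)
        = ∑ s, ∑ a, (visit γ P pol η s a * R s a
          + γ * (visit γ P pol η s a * (∑ s', Ph s a s' * V s'))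
          - visit γ P pol η s a * V s) :=
          Finset.sum_congr rfl fun s _ => Finset.sum_congr rfl fun a _ => hpt s a
      _ = _ := by
          simp only [Finset.sum_sub_distrib, Finset.sum_add_distrib, ← Finset.mul_sum]
  have key : (1 - γ) * (discSum γ P pol η (fun s a => Real.log (softmax Q s a))
        - (discSum γ P pol η R - ∑ s, η s * V s))
      = γ * ∑ s, ∑ a, visit γ P pol η s a
          * ((∑ s', Ph s a s' * V s') - (∑ s', P s a s' * V s')) := by
    have expand : ∑ s, ∑ a, visit γ P pol η s a
          * ((∑ s', Ph s a s' * V s') - (∑ s', P s a s' * V s'))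
        = (∑ s, ∑ a, visit γ P pol η s a * (∑ s', Ph s a s' * V s'))
          - ∑ s, ∑ a, visit γ P pol η s a * (∑ s', P s a s' * V s') := by
      simp only [mul_sub, Finset.sum_sub_distrib]
    rw [expand]
    linear_combination -e1 + e2 + e7 - e6
  -- bound the RHS
  have hbd : |∑ s, ∑ a, visit γ P pol η s a
        * ((∑ s', Ph s a s' * V s') - (∑ s', P s a s' * V s'))| ≤ Cv * ε := by
    have hptb : ∀ s a, |(∑ s', Ph s a s' * V s') - (∑ s', P s a s' * V s')|
        ≤ Cv * ∑ s', |P s a s' - Ph s a s'| := by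
      intro s a
      have : (∑ s', Ph s a s' * V s') - (∑ s', P s a s' * V s')
          = ∑ s', (Ph s a s' - P s a s') * V s' := by
        rw [← Finset.sum_sub_distrib]
        exact Finset.sum_congr rfl fun s' _ => by ring
      rw [this, Finset.mul_sum]
      refine (Finset.abs_sum_le_sum_abs _ _).trans (Finset.sum_le_sum fun s' _ => ?_)
      rw [abs_mul, abs_sub_comm]
      calc |P s a s' - Ph s a s'| * |V s'| ≤ |P s a s' - Ph s a s'| * Cv :=
            mul_le_mul_of_nonneg_left (hVCv s') (abs_nonneg _)
        _ = Cv * |P s a s' - Ph s a s'| := mul_comm _ _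
    calc |∑ s, ∑ a, visit γ P pol η s a
          * ((∑ s', Ph s a s' * V s') - (∑ s', P s a s' * V s'))|
        ≤ ∑ s, ∑ a, |visit γ P pol η s a
          * ((∑ s', Ph s a s' * V s') - (∑ s', P s a s' * V s'))| := by
          refine (Finset.abs_sum_le_sum_abs _ _).trans ?_
          exact Finset.sum_le_sum fun s _ => Finset.abs_sum_le_sum_abs _ _
      _ ≤ ∑ s, ∑ a, visit γ P pol η s a * (Cv * ∑ s', |P s a s' - Ph s a s'|) := by
          apply Finset.sum_le_sum; intro s _
          apply Finset.sum_le_sum; intro a _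
          rw [abs_mul, abs_of_nonneg (visit_nonneg hγ hP hpol hη s a)]
          exact mul_le_mul_of_nonneg_left (hptb s a) (visit_nonneg hγ hP hpol hη s a)
      _ = Cv * ∑ s, ∑ a, visit γ P pol η s a * ∑ s', |P s a s' - Ph s a s'| := by
          simp only [Finset.mul_sum]
          exact Finset.sum_congr rfl fun s _ => Finset.sum_congr rfl fun a _ =>
            Finset.sum_congr rfl fun s' _ => by ring
      _ ≤ Cv * ε := mul_le_mul_of_nonneg_left hcond hCv0
  rw [le_div_iff₀ h1γ]
  calc |discSum γ P pol η (fun s a => Real.log (softmax Q s a))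
        - (discSum γ P pol η R - ∑ s, η s * V s)| * (1 - γ)
      = |(1 - γ) * (discSum γ P pol η (fun s a => Real.log (softmax Q s a))
        - (discSum γ P pol η R - ∑ s, η s * V s))| := by
        rw [abs_mul, abs_of_pos h1γ]; ring
    _ = |γ * ∑ s, ∑ a, visit γ P pol η s a
          * ((∑ s', Ph s a s' * V s') - (∑ s', P s a s' * V s'))| := by rw [key]
    _ ≤ γ * (Cv * ε) := by
        rw [abs_mul, abs_of_pos hγ0]
        exact mul_le_mul_of_nonneg_left hbd hγ0.le
    _ = γ * Cv * ε := by ring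

end Aux

lemma integrable_of_bounded_meas {Ωm : Type} [MeasureSpace Ωm]
    [IsProbabilityMeasure (ℙ : Measure Ωm)] {f : Ωm → ℝ} (hf : Measurable f) (C : ℝ)
    (hC : ∀ ω, |f ω| ≤ C) : Integrable f ℙ :=
  (integrable_const C).mono' hf.aestronglyMeasurable
    (Filter.Eventually.of_forall fun ω => by simpa [Real.norm_eq_abs] using hC ω)

/-- Chebyshev bound for the L1 deviation of an empirical distribution. -/
lemma chebyshev_pair {S : Type} [Fintype S] [DecidableEq S] [MeasurableSpace S]
    [MeasurableSingletonClass S] {Ωm : Type} [MeasureSpace Ωm] [IsProbabilityMeasure (ℙ : Measure Ωm)]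
    {ι : Type} (Y : ι → Ωm → S) (hmeas : ∀ i, Measurable (Y i))
    (s : Finset ι) (N : ℕ) (hcard : s.card = N) (hN : 0 < N)
    (hpind : ∀ i ∈ s, ∀ j ∈ s, i ≠ j → ProbabilityTheory.IndepFun (Y i) (Y j) ℙ)
    (q : S → ℝ) (hq0 : ∀ x, 0 ≤ q x)
    (hlaw : ∀ i ∈ s, ∀ x, ℙ {ω | Y i ω = x} = ENNReal.ofReal (q x))
    (K : Finset S) (hqsum : ∑ x ∈ K, q x ≤ 1)
    (ε : ℝ) (hε : 0 < ε) :
    ℙ {ω | ε < ∑ x ∈ K, |q x - (N:ℝ)⁻¹ * ∑ i ∈ s, (if Y i ω = x then (1:ℝ) else 0)|}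
      ≤ ENNReal.ofReal (K.card / (N * ε ^ 2)) := by
  classical
  have hNR : (0:ℝ) < N := by exact_mod_cast hN
  set ind : ι → S → Ωm → ℝ := fun i x ω => if Y i ω = x then 1 else 0 with hind
  have hindmeas : ∀ i x, Measurable (ind i x) := by
    intro i x
    exact Measurable.ite ((hmeas i) (measurableSet_singleton x)) measurable_const
      measurable_const
  have hindint : ∀ i x, Integrable (ind i x) ℙ := fun i x =>
    integrable_of_bounded_meas (hindmeas i x) 1 fun ω => by
      by_cases h : Y i ω = x <;> simp [hind, h]
  have hEW : ∀ i ∈ s, ∀ x, ∫ ω, ind i x ω ∂ℙ = q x := by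
    intro i hi x
    have hset : MeasurableSet {ω | Y i ω = x} := (hmeas i) (measurableSet_singleton x)
    have heq : ind i x = Set.indicator {ω | Y i ω = x} (fun _ => (1:ℝ)) := by
      funext ω; by_cases h : Y i ω = x <;> simp [hind, h, Set.indicator_apply]
    rw [heq, MeasureTheory.integral_indicator_const (1:ℝ) hset,
      measureReal_def, hlaw i hi x, smul_eq_mul, mul_one, ENNReal.toReal_ofReal (hq0 x)]
  -- centered variables
  set W : ι → S → Ωm → ℝ := fun i x ω => ind i x ω - q x with hW
  have hWmeas : ∀ i x, Measurable (W i x) := fun i x => (hindmeas i x).sub measurable_const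
  have hWbd : ∀ i x ω, |W i x ω| ≤ 1 + q x := by
    intro i x ω
    by_cases h : Y i ω = x
    · have hWv : W i x ω = 1 - q x := by simp [hW, hind, h]
      rw [hWv, abs_le]; constructor <;> linarith [hq0 x]
    · have hWv : W i x ω = -q x := by simp [hW, hind, h]
      rw [hWv, abs_neg, abs_of_nonneg (hq0 x)]; linarith [hq0 x]
  have hWint : ∀ i x, Integrable (W i x) ℙ := fun i x =>
    integrable_of_bounded_meas (hWmeas i x) (1 + q x) (hWbd i x)
  have hEWzero : ∀ i ∈ s, ∀ x, ∫ ω, W i x ω ∂ℙ = 0 := by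
    intro i hi x
    rw [hW]
    simp only
    rw [integral_sub (hindint i x) (integrable_const _), hEW i hi x, integral_const]
    simp
  have hWWint : ∀ i j x, Integrable (fun ω => W i x ω * W j x ω) ℙ := by
    intro i j x
    refine integrable_of_bounded_meas ((hWmeas i x).mul (hWmeas j x)) ((1 + q x) * (1 + q x))
      fun ω => ?_
    rw [abs_mul]
    exact mul_le_mul (hWbd i x ω) (hWbd j x ω) (abs_nonneg _) (by linarith [hq0 x])
  have hcross : ∀ x, ∀ i ∈ s, ∀ j ∈ s, i ≠ j → ∫ ω, W i x ω * W j x ω ∂ℙ = 0 := by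
    intro x i hi j hj hij
    have hg : Measurable (fun y : S => (if y = x then (1:ℝ) else 0) - q x) :=
      (Measurable.ite (measurableSet_singleton x) measurable_const measurable_const).sub
        measurable_const
    have hWind : ProbabilityTheory.IndepFun (W i x) (W j x) ℙ :=
      (hpind i hi j hj hij).comp hg hg
    have h1 : integral ℙ (W i x) = 0 := hEWzero i hi x
    have h2 : integral ℙ (W j x) = 0 := hEWzero j hj x
    calc ∫ ω, W i x ω * W j x ω = integral ℙ (W i x * W j x) := rfl
      _ = integral ℙ (W i x) * integral ℙ (W j x) :=
          ProbabilityTheory.IndepFun.integral_mul_eq_mul_integral hWind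
            (hWint i x).aestronglyMeasurable (hWint j x).aestronglyMeasurable
      _ = 0 := by rw [h1, h2, mul_zero]
  have hdiag : ∀ i ∈ s, ∀ x, ∫ ω, W i x ω * W i x ω ∂ℙ = q x - q x ^ 2 := by
    intro i hi x
    have heq : ∀ ω, W i x ω * W i x ω = (1 - 2 * q x) * ind i x ω + q x ^ 2 := by
      intro ω
      by_cases h : Y i ω = x <;> simp [hW, hind, h] <;> ring
    rw [show (fun ω => W i x ω * W i x ω) = fun ω => (1 - 2 * q x) * ind i x ω + q x ^ 2
      from funext heq]
    rw [integral_add ((hindint i x).const_mul _) (integrable_const _), integral_const_mul,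
      hEW i hi x, integral_const]
    simp only [measure_univ, probReal_univ, ENNReal.toReal_one, smul_eq_mul, one_mul]
    ring
  -- variance of the empirical frequency
  have hvar : ∀ x, ∫ ω, (q x - (N:ℝ)⁻¹ * ∑ i ∈ s, ind i x ω) ^ 2 ∂ℙ ≤ q x / N := by
    intro x
    have hpt : ∀ ω, (q x - (N:ℝ)⁻¹ * ∑ i ∈ s, ind i x ω) ^ 2
        = ((N:ℝ)⁻¹) ^ 2 * ∑ i ∈ s, ∑ j ∈ s, W i x ω * W j x ω := by
      intro ω
      have hsub : ∑ i ∈ s, W i x ω = (∑ i ∈ s, ind i x ω) - N * q x := by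
        rw [hW]
        simp only
        rw [Finset.sum_sub_distrib, Finset.sum_const, hcard, nsmul_eq_mul]
      have hsq : (∑ i ∈ s, W i x ω) * (∑ j ∈ s, W j x ω)
          = ∑ i ∈ s, ∑ j ∈ s, W i x ω * W j x ω := Finset.sum_mul_sum _ _ _ _
      rw [← hsq, hsub]
      field_simp
      ring
    rw [show (fun ω => (q x - (N:ℝ)⁻¹ * ∑ i ∈ s, ind i x ω) ^ 2)
        = fun ω => ((N:ℝ)⁻¹) ^ 2 * ∑ i ∈ s, ∑ j ∈ s, W i x ω * W j x ω from funext hpt]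
    rw [integral_const_mul, integral_finset_sum _ fun i _ =>
      integrable_finset_sum _ fun j _ => hWWint i j x]
    have hinner : ∀ i ∈ s, ∫ ω, ∑ j ∈ s, W i x ω * W j x ω ∂ℙ = q x - q x ^ 2 := by
      intro i hi
      rw [integral_finset_sum _ fun j _ => hWWint i j x]
      rw [Finset.sum_eq_single_of_mem i hi fun j hj hne => hcross x i hi j hj (Ne.symm hne)]
      exact hdiag i hi x
    rw [Finset.sum_congr rfl hinner, Finset.sum_const, hcard, nsmul_eq_mul]
    have heq2 : ((N:ℝ)⁻¹) ^ 2 * ((N:ℝ) * (q x - q x ^ 2)) = (q x - q x ^ 2) / N := by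
      field_simp
    rw [heq2]
    have hnum : q x - q x ^ 2 ≤ q x := by nlinarith [sq_nonneg (q x)]
    gcongr
  -- the L1 statistic
  set Z : Ωm → ℝ := fun ω => ∑ x ∈ K, |q x - (N:ℝ)⁻¹ * ∑ i ∈ s, ind i x ω| with hZ
  have hEmp01 : ∀ x ω, 0 ≤ (N:ℝ)⁻¹ * ∑ i ∈ s, ind i x ω
      ∧ (N:ℝ)⁻¹ * ∑ i ∈ s, ind i x ω ≤ 1 := by
    intro x ω
    have h0 : ∀ i ∈ s, (0:ℝ) ≤ ind i x ω := fun i _ => by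
      by_cases h : Y i ω = x <;> simp [hind, h]
    have h1 : ∀ i ∈ s, ind i x ω ≤ 1 := fun i _ => by
      by_cases h : Y i ω = x <;> simp [hind, h]
    constructor
    · exact mul_nonneg (by positivity) (Finset.sum_nonneg h0)
    · rw [inv_mul_le_iff₀ hNR, mul_one]
      calc ∑ i ∈ s, ind i x ω ≤ ∑ _i ∈ s, (1:ℝ) := Finset.sum_le_sum h1
        _ = N := by rw [Finset.sum_const, hcard, nsmul_eq_mul, mul_one]
  have hdbd : ∀ x ω, |q x - (N:ℝ)⁻¹ * ∑ i ∈ s, ind i x ω| ≤ q x + 1 := by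
    intro x ω
    obtain ⟨h0, h1⟩ := hEmp01 x ω
    rw [abs_le]
    constructor <;> nlinarith [hq0 x]
  set CZ : ℝ := ∑ x ∈ K, (q x + 1) with hCZ
  have hZmeas : Measurable Z := by
    apply Finset.measurable_sum
    intro x _
    exact (measurable_const.sub ((Finset.measurable_sum s fun i _ =>
      hindmeas i x).const_mul _)).abs
  have hZnn : ∀ ω, 0 ≤ Z ω := fun ω => Finset.sum_nonneg fun x _ => abs_nonneg _
  have hZbd : ∀ ω, Z ω ≤ CZ := fun ω => Finset.sum_le_sum fun x _ => hdbd x ω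
  have hZsqint : Integrable (fun ω => Z ω ^ 2) ℙ := by
    refine integrable_of_bounded_meas (hZmeas.pow_const 2) (CZ ^ 2) fun ω => ?_
    rw [abs_of_nonneg (sq_nonneg _)]
    exact pow_le_pow_left₀ (hZnn ω) (hZbd ω) 2
  have hsq_le : ∀ ω, Z ω ^ 2 ≤ K.card * ∑ x ∈ K, (q x - (N:ℝ)⁻¹ * ∑ i ∈ s, ind i x ω) ^ 2 := by
    intro ω
    have h1 : (∑ x ∈ K, |q x - (N:ℝ)⁻¹ * ∑ i ∈ s, ind i x ω|) ^ 2
        ≤ K.card * ∑ x ∈ K, |q x - (N:ℝ)⁻¹ * ∑ i ∈ s, ind i x ω| ^ 2 :=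
      sq_sum_le_card_mul_sum_sq
    calc Z ω ^ 2 ≤ K.card * ∑ x ∈ K, |q x - (N:ℝ)⁻¹ * ∑ i ∈ s, ind i x ω| ^ 2 := h1
      _ = K.card * ∑ x ∈ K, (q x - (N:ℝ)⁻¹ * ∑ i ∈ s, ind i x ω) ^ 2 := by
          congr 1
          exact Finset.sum_congr rfl fun x _ => sq_abs _
  have hdmeas : ∀ x, Measurable (fun ω => (q x - (N:ℝ)⁻¹ * ∑ i ∈ s, ind i x ω) ^ 2) := by
    intro x
    exact ((measurable_const.sub ((Finset.measurable_sum s fun i _ =>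
      hindmeas i x).const_mul _)).pow_const 2)
  have hdint : ∀ x, Integrable (fun ω => (q x - (N:ℝ)⁻¹ * ∑ i ∈ s, ind i x ω) ^ 2) ℙ := by
    intro x
    refine integrable_of_bounded_meas (hdmeas x) ((q x + 1) ^ 2) fun ω => ?_
    rw [abs_of_nonneg (sq_nonneg _), ← sq_abs]
    exact pow_le_pow_left₀ (abs_nonneg _) (hdbd x ω) 2
  have hEZsq : ∫ ω, Z ω ^ 2 ∂ℙ ≤ K.card / N := by
    calc ∫ ω, Z ω ^ 2 ∂ℙ
        ≤ ∫ ω, (K.card : ℝ) * ∑ x ∈ K, (q x - (N:ℝ)⁻¹ * ∑ i ∈ s, ind i x ω) ^ 2 ∂ℙ :=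
          integral_mono hZsqint ((integrable_finset_sum _ fun x _ => hdint x).const_mul _)
            hsq_le
      _ = K.card * ∑ x ∈ K, ∫ ω, (q x - (N:ℝ)⁻¹ * ∑ i ∈ s, ind i x ω) ^ 2 ∂ℙ := by
          rw [integral_const_mul, integral_finset_sum _ fun x _ => hdint x]
      _ ≤ K.card * ∑ x ∈ K, q x / N := by
          apply mul_le_mul_of_nonneg_left (Finset.sum_le_sum fun x _ => hvar x)
            (Nat.cast_nonneg _)
      _ ≤ K.card / N := by
          rw [← Finset.sum_div]
          calc (K.card : ℝ) * ((∑ x ∈ K, q x) / N) ≤ K.card * (1 / N) := by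
                apply mul_le_mul_of_nonneg_left _ (Nat.cast_nonneg _)
                gcongr
            _ = K.card / N := by ring
  have hmark := mul_meas_ge_le_integral_of_nonneg (μ := ℙ)
    (Filter.Eventually.of_forall fun ω => sq_nonneg (Z ω)) hZsqint (ε ^ 2)
  have hsubset : {ω | ε < Z ω} ⊆ {ω | ε ^ 2 ≤ Z ω ^ 2} := fun ω h =>
    pow_le_pow_left₀ hε.le (le_of_lt h) 2
  have hε2 : (0:ℝ) < ε ^ 2 := by positivity
  calc ℙ {ω | ε < Z ω} ≤ ℙ {ω | ε ^ 2 ≤ Z ω ^ 2} := measure_mono hsubset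
    _ = ENNReal.ofReal ((ℙ {ω | ε ^ 2 ≤ Z ω ^ 2}).toReal) :=
        (ENNReal.ofReal_toReal (measure_ne_top _ _)).symm
    _ ≤ ENNReal.ofReal (K.card / (N * ε ^ 2)) := by
        apply ENNReal.ofReal_le_ofReal
        have h1 : (ℙ {ω | ε ^ 2 ≤ Z ω ^ 2}).toReal ≤ (K.card / N) / ε ^ 2 := by
          rw [le_div_iff₀ hε2]
          rw [measureReal_def] at hmark
          nlinarith [hmark, hEZsq]
        calc (ℙ {ω | ε ^ 2 ≤ Z ω ^ 2}).toReal ≤ (K.card / N) / ε ^ 2 := h1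
          _ = K.card / (N * ε ^ 2) := by rw [div_div]
section Chernoff

open ProbabilityTheory

/-- Chernoff bound for the upper deviation of an empirical frequency of a set `B`. -/
lemma chernoff_pair {S : Type} [Fintype S] [DecidableEq S] [MeasurableSpace S]
    [MeasurableSingletonClass S]
    {Ωm : Type} [MeasureSpace Ωm] [IsProbabilityMeasure (ℙ : Measure Ωm)]
    {ι : Type} (Y : ι → Ωm → S) (hmeas : ∀ i, Measurable (Y i))
    (hind : iIndepFun (m := fun _ : ι => (inferInstance : MeasurableSpace S)) Y ℙ)
    (s : Finset ι) (N : ℕ) (hcard : s.card = N) (hN : 0 < N)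
    (B : Finset S) (m : ℝ) (hm0 : 0 ≤ m) (hm1 : m ≤ 1)
    (hlawB : ∀ i ∈ s, ℙ {ω | Y i ω ∈ B} = ENNReal.ofReal m)
    (ε : ℝ) (hε : 0 < ε)
    (bern : (1 - m) + m * Real.exp (2 * ε) ≤ Real.exp (2 * ε * m + (2 * ε) ^ 2 / 8)) :
    ℙ {ω | (N:ℝ) * (m + ε / 2) ≤ ∑ i ∈ s, (if Y i ω ∈ B then (1:ℝ) else 0)}
      ≤ ENNReal.ofReal (Real.exp (-(N:ℝ) * ε ^ 2 / 2)) := by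
  classical
  set t : ℝ := 2 * ε with htdef
  have ht0 : 0 ≤ t := by positivity
  have hBmeas : MeasurableSet (↑B : Set S) := B.finite_toSet.measurableSet
  set g : ι → Ωm → ℝ := fun i => (fun x : S => if x ∈ B then (1:ℝ) else 0) ∘ Y i with hg
  have hgmeas : ∀ i, Measurable (g i) := by
    intro i
    exact (Measurable.ite hBmeas measurable_const measurable_const).comp (hmeas i)
  have hgind : iIndepFun (m := fun _ : ι => (inferInstance : MeasurableSpace ℝ)) g ℙ :=
    hind.comp _ fun i => Measurable.ite hBmeas measurable_const measurable_const
  have hg01 : ∀ i ω, 0 ≤ g i ω ∧ g i ω ≤ 1 := by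
    intro i ω
    by_cases h : Y i ω ∈ B <;> simp [hg, h, Function.comp]
  -- mgf of each summand
  have hmgf_one : ∀ i ∈ s, mgf (g i) ℙ t = (1 - m) + m * Real.exp t := by
    intro i hi
    have hset : MeasurableSet {ω | Y i ω ∈ B} := (hmeas i) hBmeas
    have heq : (fun ω => Real.exp (t * g i ω))
        = fun ω => (Real.exp t - 1) * Set.indicator {ω | Y i ω ∈ B} (fun _ => (1:ℝ)) ω + 1 := by
      funext ω
      by_cases h : Y i ω ∈ B <;>
        simp [hg, h, Function.comp, Set.indicator_apply, Real.exp_zero]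
    have hindint : Integrable (Set.indicator {ω | Y i ω ∈ B} fun _ => (1:ℝ)) ℙ :=
      (integrable_const (1:ℝ)).indicator hset
    rw [mgf, heq, integral_add (hindint.const_mul _) (integrable_const 1),
      integral_const_mul, MeasureTheory.integral_indicator_const (1:ℝ) hset, measureReal_def, hlawB i hi,
      integral_const, smul_eq_mul, mul_one, ENNReal.toReal_ofReal hm0]
    simp only [measure_univ, probReal_univ, ENNReal.toReal_one, smul_eq_mul, one_mul]
    ring
  -- integrability of exp of the sum
  have hsum_meas : Measurable (∑ i ∈ s, g i) := by
    have : (∑ i ∈ s, g i) = fun ω => ∑ i ∈ s, g i ω := by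
      funext ω; exact Finset.sum_apply ω s g
    rw [this]
    exact Finset.measurable_sum s fun i _ => hgmeas i
  have hsum_bd : ∀ ω, (∑ i ∈ s, g i) ω ≤ N := by
    intro ω
    rw [Finset.sum_apply ω s g]
    calc ∑ i ∈ s, g i ω ≤ ∑ _i ∈ s, (1:ℝ) := Finset.sum_le_sum fun i _ => (hg01 i ω).2
      _ = N := by rw [Finset.sum_const, hcard, nsmul_eq_mul, mul_one]
  have hsum_nn : ∀ ω, 0 ≤ (∑ i ∈ s, g i) ω := by
    intro ω
    rw [Finset.sum_apply ω s g]
    exact Finset.sum_nonneg fun i _ => (hg01 i ω).1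
  have hint : Integrable (fun ω => Real.exp (t * (∑ i ∈ s, g i) ω)) ℙ := by
    refine integrable_of_bounded_meas (Real.measurable_exp.comp
      (measurable_const.mul hsum_meas)) (Real.exp (t * N)) fun ω => ?_
    rw [Real.abs_exp]
    exact Real.exp_le_exp.mpr (mul_le_mul_of_nonneg_left (hsum_bd ω) ht0)
  -- Chernoff
  have hchern := measure_ge_le_exp_mul_mgf (X := ∑ i ∈ s, g i) (μ := ℙ) (t := t)
    ((N:ℝ) * (m + ε / 2)) ht0 hint
  have hmgf_sum : mgf (∑ i ∈ s, g i) ℙ t = ((1 - m) + m * Real.exp t) ^ N := by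
    rw [hgind.mgf_sum hgmeas s]
    rw [Finset.prod_congr rfl hmgf_one, Finset.prod_const, hcard]
  rw [hmgf_sum] at hchern
  -- the real bound
  have hbase0 : 0 ≤ (1 - m) + m * Real.exp t := by nlinarith [Real.exp_pos t]
  have hreal : Real.exp (-t * ((N:ℝ) * (m + ε / 2))) * ((1 - m) + m * Real.exp t) ^ N
      ≤ Real.exp (-(N:ℝ) * ε ^ 2 / 2) := by
    calc Real.exp (-t * ((N:ℝ) * (m + ε / 2))) * ((1 - m) + m * Real.exp t) ^ N
        ≤ Real.exp (-t * ((N:ℝ) * (m + ε / 2))) * (Real.exp (t * m + t ^ 2 / 8)) ^ N := by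
          apply mul_le_mul_of_nonneg_left _ (Real.exp_pos _).le
          exact pow_le_pow_left₀ hbase0 bern N
      _ = Real.exp (-t * ((N:ℝ) * (m + ε / 2)) + N * (t * m + t ^ 2 / 8)) := by
          rw [← Real.exp_nat_mul, ← Real.exp_add]
      _ = Real.exp (-(N:ℝ) * ε ^ 2 / 2) := by
          congr 1
          rw [htdef]
          ring
  have hgoal_set : {ω | (N:ℝ) * (m + ε / 2) ≤ ∑ i ∈ s, (if Y i ω ∈ B then (1:ℝ) else 0)}
      = {ω | (N:ℝ) * (m + ε / 2) ≤ (∑ i ∈ s, g i) ω} := by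
    ext ω
    simp only [Set.mem_setOf_eq, Finset.sum_apply]
    rfl
  rw [hgoal_set]
  calc ℙ {ω | (N:ℝ) * (m + ε / 2) ≤ (∑ i ∈ s, g i) ω}
      = ENNReal.ofReal ((ℙ {ω | (N:ℝ) * (m + ε / 2) ≤ (∑ i ∈ s, g i) ω}).toReal) :=
        (ENNReal.ofReal_toReal (measure_ne_top _ _)).symm
    _ ≤ ENNReal.ofReal (Real.exp (-(N:ℝ) * ε ^ 2 / 2)) :=
        ENNReal.ofReal_le_ofReal (hchern.trans hreal)

end Chernoff

/-- Hoeffding's lemma for a Bernoulli(m) random variable: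
`(1-m) + m e^t ≤ exp (t m + t²/8)` for `t ≥ 0`. -/
lemma bern_mgf {m t : ℝ} (hm0 : 0 ≤ m) (hm1 : m ≤ 1) (ht : 0 ≤ t) :
    (1 - m) + m * Real.exp t ≤ Real.exp (t * m + t ^ 2 / 8) := by
  set u : ℝ → ℝ := fun x => 1 - m + m * Real.exp x with hu
  have hupos : ∀ x, 0 < u x := by
    intro x
    rcases eq_or_lt_of_le hm1 with h | h
    · have : u x = Real.exp x := by simp [hu, h]
      rw [this]; exact Real.exp_pos x
    · have h2 : 0 ≤ m * Real.exp x := mul_nonneg hm0 (Real.exp_pos x).le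
      have : u x = 1 - m + m * Real.exp x := rfl
      rw [this]; linarith
  have hud : ∀ x, HasDerivAt u (m * Real.exp x) x := by
    intro x
    exact ((Real.hasDerivAt_exp x).const_mul m).const_add (1 - m)
  set G : ℝ → ℝ := fun x => m * Real.exp x / u x with hG
  have hu0 : u 0 = 1 := by simp [hu]
  have hG0 : G 0 = m := by simp [hG, hu0]
  have hGd : ∀ x, HasDerivAt G (G x - G x ^ 2) x := by
    intro x
    have h := ((Real.hasDerivAt_exp x).const_mul m).div (hud x) (ne_of_gt (hupos x))
    refine h.congr_deriv ?_
    have hux := ne_of_gt (hupos x)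
    show (m * Real.exp x * u x - m * Real.exp x * (m * Real.exp x)) / u x ^ 2 = m * Real.exp x / u x - (m * Real.exp x / u x) ^ 2
    field_simp
  have hGle : ∀ x, 0 ≤ G x ∧ G x ≤ 1 := by
    intro x
    constructor
    · exact div_nonneg (mul_nonneg hm0 (Real.exp_pos x).le) (hupos x).le
    · rw [hG, div_le_one (hupos x)]
      show m * Real.exp x ≤ 1 - m + m * Real.exp x
      linarith
  have step1 : ∀ x : ℝ, 0 ≤ x → G x - m ≤ x / 4 := by
    set φ : ℝ → ℝ := fun x => x / 4 - (G x - m) with hφ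
    have hφd : ∀ x, HasDerivAt φ (1 / 4 - (G x - G x ^ 2)) x := by
      intro x
      exact ((hasDerivAt_id x).div_const 4).sub ((hGd x).sub_const m)
    have hmono : MonotoneOn φ (Set.Ici 0) := by
      apply monotoneOn_of_deriv_nonneg (convex_Ici 0)
      · exact fun x _ => ((hφd x).differentiableAt.continuousAt).continuousWithinAt
      · exact fun x _ => (hφd x).differentiableAt.differentiableWithinAt
      · intro x _
        rw [(hφd x).deriv]
        have := hGle x
        nlinarith [sq_nonneg (G x - 1 / 2)]
    intro x hx
    have h := hmono Set.self_mem_Ici hx hx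
    have hφ0 : φ 0 = 0 := by simp [hφ, hG0]
    have : φ x = x / 4 - (G x - m) := rfl
    rw [hφ0] at h
    rw [this] at h
    linarith
  set f : ℝ → ℝ := fun x => Real.log (u x) - m * x with hf
  have hfd : ∀ x, HasDerivAt f (G x - m) x := by
    intro x
    have hl : HasDerivAt (fun x => Real.log (u x)) (m * Real.exp x / u x) x :=
      (hud x).log (ne_of_gt (hupos x))
    exact (hl.sub ((hasDerivAt_id x).const_mul m)).congr_deriv (by rw [mul_one])
  set ψ : ℝ → ℝ := fun x => x ^ 2 / 8 - f x with hψ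
  have hψd : ∀ x, HasDerivAt ψ (x / 4 - (G x - m)) x := by
    intro x
    have h1 : HasDerivAt (fun x : ℝ => x ^ 2 / 8) (x / 4) x := by
      have := (hasDerivAt_pow 2 x).div_const 8
      refine this.congr_deriv ?_
      ring
    exact h1.sub (hfd x)
  have hψmono : MonotoneOn ψ (Set.Ici 0) := by
    apply monotoneOn_of_deriv_nonneg (convex_Ici 0)
    · exact fun x _ => ((hψd x).differentiableAt.continuousAt).continuousWithinAt
    · exact fun x _ => (hψd x).differentiableAt.differentiableWithinAt
    · intro x hx
      rw [interior_Ici] at hx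
      rw [(hψd x).deriv]
      have := step1 x (le_of_lt hx)
      linarith
  have hψ0 : ψ 0 = 0 := by
    have : ψ 0 = 0 ^ 2 / 8 - (Real.log (u 0) - m * 0) := rfl
    rw [this, hu0]
    simp
  have hfin : f t ≤ t ^ 2 / 8 := by
    have h := hψmono Set.self_mem_Ici ht ht
    rw [hψ0] at h
    have : ψ t = t ^ 2 / 8 - f t := rfl
    rw [this] at h
    linarith
  have hlog : Real.log (u t) ≤ m * t + t ^ 2 / 8 := by
    have : f t = Real.log (u t) - m * t := rfl
    rw [this] at hfin
    linarith
  calc (1 - m) + m * Real.exp t = u t := rfl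
    _ ≤ Real.exp (t * m + t ^ 2 / 8) := by
        rw [← Real.exp_log (hupos t)]
        exact Real.exp_le_exp.mpr (by linarith)

lemma arith_cheb_final {L t kR NR eps : ℝ} (ht : 0 < t) (ht2 : t ^ 2 = L) (hL : L ≤ 1/2)
    (hNe2 : kR * (1 + t) ^ 2 ≤ NR * eps ^ 2) (hNR : 0 < NR) (heps : 0 < eps) :
    kR / (NR * eps ^ 2) ≤ Real.exp (-L) := by
  have hLpos : 0 < L := by nlinarith
  have h1t : (0:ℝ) < (1 + t) ^ 2 := by positivity
  have ht1 : t ≤ 1 := by nlinarith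
  have h1 : kR / (NR * eps ^ 2) ≤ 1 / (1 + t) ^ 2 := by
    rw [div_le_div_iff₀ (by positivity) h1t]
    nlinarith
  have h2 : 1 / (1 + t) ^ 2 ≤ 1 - L := by
    rw [div_le_iff₀ h1t]
    nlinarith [mul_nonneg ht.le (sq_nonneg t), sq_nonneg (t * t), mul_nonneg ht.le ht.le]
  have h3 : 1 - L ≤ Real.exp (-L) := by linarith [Real.add_one_le_exp (-L)]
  linarith

lemma arith_hoef_final {L t kR NR eps : ℝ} (ht : 0 < t) (ht2 : t ^ 2 = L) (hL : 1/2 < L)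
    (hk2 : 2 ≤ kR) (hNe2 : kR * (1 + t) ^ 2 ≤ NR * eps ^ 2) :
    kR * Real.log 2 + -(NR * eps ^ 2) / 2 ≤ -L := by
  have hlog2 : Real.log 2 < 0.6931471808 := Real.log_two_lt_d9
  have hlog2' : 0 < Real.log 2 := Real.log_pos (by norm_num)
  have ht7 : (0.7:ℝ) ≤ t := by nlinarith
  have key : 2 * kR * Real.log 2 + 2 * L ≤ kR * (1 + t) ^ 2 := by
    nlinarith [mul_nonneg (sub_nonneg.mpr hk2) (sq_nonneg t),
      mul_nonneg (by linarith : (0:ℝ) ≤ kR) (by linarith : (0:ℝ) ≤ 1 + 2 * t - 2 * Real.log 2)]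
  linarith

set_option maxHeartbeats 2000000

/-- **Theorem 1, sample complexity of the world model.**
If every expert-visited pair is sampled `N` times i.i.d. from `P(·|s,a)`, `P̂` is the
empirical estimate, and the total number of transition samples `N |Ω|` is at least
`(c² |Ω| |Sᴱ| / ε²) ln(|Ω|/δ)` with `c = 1 + 1/√(ln(|Ω|/δ))`, then with probability at
least `1 - δ`, both `E_{(s,a)∼dᴱ}[‖P(·|s,a) - P̂(·|s,a)‖₁] ≤ ε` and, for every reward
parameter `θ`, `|L(θ) - L̂(θ)| ≤ γ C_v ε/(1-γ)` with
`C_v = (C_r + C_u + log|A|)/(1-γ)`. -/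
theorem stmt3 {S A : Type} [Fintype S] [Fintype A] [Nonempty S] [Nonempty A]
    [DecidableEq S] [MeasurableSpace S] [MeasurableSingletonClass S] (d : ℕ)
    (γ : ℝ) (hγ : γ ∈ Set.Ioo (0 : ℝ) 1)
    (P : S → A → S → ℝ) (hP : IsKernel P)
    (η : S → ℝ) (hη : IsDist η)
    (piE : S → A → ℝ) (hpiE : IsPolicy piE)
    (r : S → A → EuclideanSpace ℝ (Fin d) → ℝ) (U : S → A → ℝ)
    (Cr Cu : ℝ) (hCr : 0 < Cr) (hCu : 0 < Cu)
    (hr : ∀ s a θ, |r s a θ| ≤ Cr) (hU : ∀ s a, |U s a| ≤ Cu)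
    (hsupp : ∀ p ∈ expertPairs γ P piE η, ∀ s',
      0 < P p.1 p.2 s' → s' ∈ expertStates γ P piE η)
    (Ωm : Type) [MeasureSpace Ωm] [IsProbabilityMeasure (ℙ : Measure Ωm)]
    (N : ℕ) (hN : 0 < N)
    (X : S × A → Fin N → Ωm → S) (hXmeas : ∀ p i, Measurable (X p i))
    (hindep : ProbabilityTheory.iIndepFun
      (m := fun _ : (S × A) × Fin N => (inferInstance : MeasurableSpace S))
      (fun q ω => X q.1 q.2 ω) ℙ)
    (hlaw : ∀ p ∈ expertPairs γ P piE η, ∀ (i : Fin N) (s' : S),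
      ℙ {ω | X p i ω = s'} = ENNReal.ofReal (P p.1 p.2 s'))
    (Phat : Ωm → S → A → S → ℝ) (hPhatK : ∀ ω, IsKernel (Phat ω))
    (hemp : ∀ p ∈ expertPairs γ P piE η, ∀ (ω : Ωm) (s' : S),
      Phat ω p.1 p.2 s' = ((Finset.univ.filter fun i : Fin N => X p i ω = s').card : ℝ) / N)
    (Q : Ωm → EuclideanSpace ℝ (Fin d) → S → A → ℝ)
    (hQ : ∀ ω θ s a, Q ω θ s a = r s a θ + U s a + γ * ∑ s', Phat ω s a s' * lse (Q ω θ) s')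
    (δ ε : ℝ) (hδ : δ ∈ Set.Ioo (0 : ℝ) 1) (hε : ε ∈ Set.Ioo (0 : ℝ) 2)
    (c : ℝ) (hc : c = 1 + 1 / Real.sqrt (Real.log ((expertPairs γ P piE η).card / δ)))
    (hsamp : c ^ 2 * (expertPairs γ P piE η).card * (expertStates γ P piE η).card / ε ^ 2 *
        Real.log ((expertPairs γ P piE η).card / δ) ≤ (N : ℝ) * (expertPairs γ P piE η).card) :
    ENNReal.ofReal (1 - δ) ≤ ℙ {ω |
      (∑ s, ∑ a, visit γ P piE η s a * ∑ s', |P s a s' - Phat ω s a s'|) ≤ ε ∧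
      ∀ θ, |discSum γ P piE η (fun s a => Real.log (softmax (Q ω θ) s a)) -
          (discSum γ P piE η (fun s a => r s a θ + U s a) - ∑ s, η s * lse (Q ω θ) s)| ≤
        γ * ((Cr + Cu + Real.log (Fintype.card A)) / (1 - γ)) * ε / (1 - γ)} := by
  classical
  obtain ⟨hγ0, hγ1⟩ := hγ
  have hγm : γ ∈ Set.Ioo (0:ℝ) 1 := ⟨hγ0, hγ1⟩
  obtain ⟨hδ0, hδ1⟩ := hδ
  obtain ⟨hε0, hε2'⟩ := hε
  set Ω' : Finset (S × A) := expertPairs γ P piE η with hΩ'def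
  set K : Finset S := expertStates γ P piE η with hKdef
  have hvnn : ∀ s a, 0 ≤ visit γ P piE η s a := fun s a => visit_nonneg hγm hP hpiE hη s a
  have hvsum : ∑ s, ∑ a, visit γ P piE η s a = 1 := sum_visit_eq_one hγm hP hpiE hη
  have hvpos : ∃ s a, 0 < visit γ P piE η s a := by
    by_contra hcon
    push_neg at hcon
    have : ∑ s, ∑ a, visit γ P piE η s a ≤ 0 :=
      Finset.sum_nonpos fun s _ => Finset.sum_nonpos fun a _ => hcon s a
    linarith
  obtain ⟨s₀, a₀, hsa₀⟩ := hvpos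
  have hΩne : Ω'.Nonempty := ⟨(s₀, a₀), by
    rw [hΩ'def, expertPairs, Finset.mem_filter]
    exact ⟨Finset.mem_univ _, hsa₀⟩⟩
  have hKne : K.Nonempty := ⟨s₀, by
    rw [hKdef, expertStates, Finset.mem_filter]
    refine ⟨Finset.mem_univ _, ?_⟩
    exact lt_of_lt_of_le hsa₀ (Finset.single_le_sum (fun a _ => hvnn s₀ a) (Finset.mem_univ a₀))⟩
  have hΩpos : (0:ℝ) < Ω'.card := by exact_mod_cast Finset.card_pos.mpr hΩne
  have hk1 : 1 ≤ K.card := Finset.card_pos.mpr hKne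
  have hNpos : (0:ℝ) < N := by exact_mod_cast hN
  set L : ℝ := Real.log (Ω'.card / δ) with hLdef
  have hratio1 : (1:ℝ) < Ω'.card / δ := by
    rw [lt_div_iff₀ hδ0]
    have h1 : (1:ℝ) ≤ Ω'.card := by exact_mod_cast Finset.card_pos.mpr hΩne
    nlinarith
  have hLpos : 0 < L := Real.log_pos hratio1
  set tL : ℝ := Real.sqrt L with htLdef
  have htLpos : 0 < tL := Real.sqrt_pos.mpr hLpos
  have htL2 : tL ^ 2 = L := Real.sq_sqrt hLpos.le
  have hexpL : Real.exp (-L) = δ / Ω'.card := by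
    rw [hLdef, Real.exp_neg, Real.exp_log (by positivity), inv_div]
  have hc2L : c ^ 2 * L = (1 + tL) ^ 2 := by
    rw [hc, ← htL2]
    have : tL ≠ 0 := ne_of_gt htLpos
    field_simp
    ring
  have hNe2 : (K.card : ℝ) * (1 + tL) ^ 2 ≤ N * ε ^ 2 := by
    have h1 : c ^ 2 * Ω'.card * K.card / ε ^ 2 * L ≤ (N:ℝ) * Ω'.card := hsamp
    have hε2pos : (0:ℝ) < ε ^ 2 := by positivity
    rw [div_mul_eq_mul_div, div_le_iff₀ hε2pos] at h1
    have h3 : c ^ 2 * K.card * L ≤ N * ε ^ 2 :=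
      le_of_mul_le_mul_right (by nlinarith [h1]) hΩpos
    calc (K.card:ℝ) * (1 + tL) ^ 2 = K.card * (c ^ 2 * L) := by rw [hc2L]
      _ = c ^ 2 * K.card * L := by ring
      _ ≤ N * ε ^ 2 := h3
  -- per-pair bound
  have hper : ∀ p ∈ Ω', ℙ {ω | ε < ∑ s', |P p.1 p.2 s' - Phat ω p.1 p.2 s'|}
      ≤ ENNReal.ofReal (δ / Ω'.card) := by
    intro p hp
    have hq0 : ∀ x, 0 ≤ P p.1 p.2 x := fun x => hP.1 p.1 p.2 x
    have hqK : ∀ x, x ∉ K → P p.1 p.2 x = 0 := by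
      intro x hx
      by_contra hne
      exact hx (hsupp p hp x (lt_of_le_of_ne (hq0 x) (Ne.symm hne)))
    have hqsumK : ∑ x ∈ K, P p.1 p.2 x = 1 := by
      rw [Finset.sum_subset (Finset.subset_univ K) (fun x _ hx => hqK x hx)]
      exact hP.2 p.1 p.2
    have hEmp : ∀ ω x, Phat ω p.1 p.2 x
        = (N:ℝ)⁻¹ * ∑ i, (if X p i ω = x then (1:ℝ) else 0) := by
      intro ω x
      rw [hemp p hp ω x, Finset.card_filter]
      push_cast
      rw [div_eq_inv_mul]
    set Gp : Set Ωm := {ω | ∀ i, X p i ω ∈ K} with hGpdef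
    have hGpc : ℙ Gpᶜ = 0 := by
      have hsub : Gpᶜ ⊆ ⋃ i : Fin N, {ω | X p i ω ∉ K} := by
        intro ω hω
        simp only [hGpdef, Set.mem_compl_iff, Set.mem_setOf_eq, not_forall] at hω
        obtain ⟨i, hi⟩ := hω
        exact Set.mem_iUnion.mpr ⟨i, hi⟩
      refine measure_mono_null hsub (measure_iUnion_null fun i => ?_)
      have hnull : ∀ x : S, ℙ (if x ∈ K then (∅ : Set Ωm) else {ω | X p i ω = x}) = 0 := by
        intro x
        by_cases hx : x ∈ K
        · rw [if_pos hx]; exact measure_empty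
        · rw [if_neg hx, hlaw p hp i x, hqK x hx, ENNReal.ofReal_zero]
      refine measure_mono_null (fun ω hω => ?_) (measure_iUnion_null hnull)
      refine Set.mem_iUnion.mpr ⟨X p i ω, ?_⟩
      rw [if_neg hω]
      exact rfl
    set Z' : Ωm → ℝ :=
      fun ω => ∑ x ∈ K, |P p.1 p.2 x - (N:ℝ)⁻¹ * ∑ i, (if X p i ω = x then (1:ℝ) else 0)|
      with hZ'def
    have hZeq : ∀ ω ∈ Gp, (∑ s', |P p.1 p.2 s' - Phat ω p.1 p.2 s'|) = Z' ω := by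
      intro ω hω
      rw [hZ'def]
      rw [← Finset.sum_subset (Finset.subset_univ K) (fun x _ hx => ?_)]
      · apply Finset.sum_congr rfl
        intro x _
        rw [hEmp ω x]
      · have hind0 : ∀ i : Fin N, (if X p i ω = x then (1:ℝ) else 0) = 0 := by
          intro i
          rw [if_neg]
          intro h
          exact hx (h ▸ hω i)
        rw [hEmp ω x, hqK x hx]
        simp [hind0]
    have hred : ℙ {ω | ε < ∑ s', |P p.1 p.2 s' - Phat ω p.1 p.2 s'|}
        ≤ ℙ ({ω | ε < Z' ω} ∩ Gp) := by
      have hsub : {ω | ε < ∑ s', |P p.1 p.2 s' - Phat ω p.1 p.2 s'|}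
          ⊆ ({ω | ε < Z' ω} ∩ Gp) ∪ Gpᶜ := by
        intro ω hω
        by_cases hg : ω ∈ Gp
        · exact Or.inl ⟨by rw [Set.mem_setOf_eq, ← hZeq ω hg]; exact hω, hg⟩
        · exact Or.inr hg
      calc ℙ {ω | ε < ∑ s', |P p.1 p.2 s' - Phat ω p.1 p.2 s'|}
          ≤ ℙ (({ω | ε < Z' ω} ∩ Gp) ∪ Gpᶜ) := measure_mono hsub
        _ ≤ ℙ ({ω | ε < Z' ω} ∩ Gp) + ℙ Gpᶜ := measure_union_le _ _
        _ = ℙ ({ω | ε < Z' ω} ∩ Gp) := by rw [hGpc, add_zero]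
    refine hred.trans ?_
    have hpind : ∀ i j : Fin N, i ≠ j → ProbabilityTheory.IndepFun (X p i) (X p j) ℙ := by
      intro i j hij
      exact hindep.indepFun (by simp [hij] : ((p, i) : (S × A) × Fin N) ≠ (p, j))
    rcases le_or_gt L (1/2) with hLsmall | hLbig
    · -- Chebyshev branch
      have hcheb := chebyshev_pair (fun i : Fin N => X p i) (fun i => hXmeas p i)
        Finset.univ N (by simp) hN (fun i _ j _ hij => hpind i j hij) (P p.1 p.2) hq0
        (fun i _ x => hlaw p hp i x) K (le_of_eq hqsumK) ε hε0
      refine le_trans (measure_mono Set.inter_subset_left) (le_trans hcheb ?_)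
      apply ENNReal.ofReal_le_ofReal
      rw [← hexpL]
      exact arith_cheb_final htLpos htL2 hLsmall hNe2 hNpos hε0
    · -- Hoeffding branch
      rcases eq_or_lt_of_le hk1 with hk1' | hk2
      · -- |K| = 1 : the event is almost surely empty
        obtain ⟨x₀, hx₀⟩ := Finset.card_eq_one.mp hk1'.symm
        have hempty : ({ω | ε < Z' ω} ∩ Gp) = ∅ := by
          rw [Set.eq_empty_iff_forall_notMem]
          rintro ω ⟨hωZ, hωG⟩
          have hq1 : P p.1 p.2 x₀ = 1 := by
            rw [hx₀, Finset.sum_singleton] at hqsumK; exact hqsumK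
          have hindall : ∀ i : Fin N, (if X p i ω = x₀ then (1:ℝ) else 0) = 1 := by
            intro i
            have hmem := hωG i
            rw [hx₀, Finset.mem_singleton] at hmem
            rw [if_pos hmem]
          have hZ0 : Z' ω = 0 := by
            rw [hZ'def]
            simp only
            rw [hx₀, Finset.sum_singleton, hq1,
              Finset.sum_congr rfl (fun i _ => hindall i), Finset.sum_const,
              Finset.card_univ, Fintype.card_fin, nsmul_eq_mul, mul_one,
              inv_mul_cancel₀ (ne_of_gt hNpos)]
            simp
          have hcontra : ε < Z' ω := hωZ
          rw [hZ0] at hcontra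
          linarith
        rw [hempty, measure_empty]
        exact zero_le
      · -- |K| ≥ 2
        have hYYmeas : ∀ z : (S × A) × Fin N, Measurable (fun ω => X z.1 z.2 ω) :=
          fun z => hXmeas z.1 z.2
        set sidx : Finset ((S × A) × Fin N) := {p} ×ˢ Finset.univ with hsidxdef
        have hsidxcard : sidx.card = N := by
          rw [hsidxdef, Finset.card_product, Finset.card_singleton, one_mul,
            Finset.card_univ, Fintype.card_fin]
        have hEB : ∀ B : Finset S, B ⊆ K →
            ℙ {ω | (N:ℝ) * ((∑ x ∈ B, P p.1 p.2 x) + ε / 2)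
                ≤ ∑ z ∈ sidx, (if X z.1 z.2 ω ∈ B then (1:ℝ) else 0)}
              ≤ ENNReal.ofReal (Real.exp (-(N:ℝ) * ε ^ 2 / 2)) := by
          intro B hB
          set m : ℝ := ∑ x ∈ B, P p.1 p.2 x with hmdef
          have hm0 : 0 ≤ m := Finset.sum_nonneg fun x _ => hq0 x
          have hm1 : m ≤ 1 := by
            rw [← hqsumK]
            exact Finset.sum_le_sum_of_subset_of_nonneg hB fun x _ _ => hq0 x
          have hlawB : ∀ z ∈ sidx, ℙ {ω | X z.1 z.2 ω ∈ B} = ENNReal.ofReal m := by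
            intro z hz
            rw [hsidxdef, Finset.mem_product, Finset.mem_singleton] at hz
            have hz1 : z.1 = p := hz.1
            have hBev : {ω | X z.1 z.2 ω ∈ B}
                = ⋃ x ∈ B, {ω | X z.1 z.2 ω = x} := by
              ext ω
              simp only [Set.mem_setOf_eq, Set.mem_iUnion]
              constructor
              · intro h; exact ⟨X z.1 z.2 ω, h, rfl⟩
              · rintro ⟨x, hx, hxe⟩; exact hxe ▸ hx
            have hdisj : (↑B : Set S).Pairwise
                (Function.onFun Disjoint fun x => {ω | X z.1 z.2 ω = x}) := by
              intro x _ y _ hxy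
              refine Set.disjoint_left.mpr fun ω h1 h2 => hxy ?_
              rw [Set.mem_setOf_eq] at h1 h2
              rw [← h1, ← h2]
            rw [hBev, measure_biUnion_finset hdisj
              (fun x _ => (hXmeas z.1 z.2) (measurableSet_singleton x))]
            have hstep : ∀ x ∈ B, ℙ {ω | X z.1 z.2 ω = x} = ENNReal.ofReal (P p.1 p.2 x) := by
              intro x _
              rw [hz1]
              exact hlaw p hp z.2 x
            rw [Finset.sum_congr rfl hstep, ← ENNReal.ofReal_sum_of_nonneg (fun x _ => hq0 x)]
          have hbern := bern_mgf hm0 hm1 (t := 2 * ε) (by positivity)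
          exact chernoff_pair (fun z ω => X z.1 z.2 ω) hYYmeas hindep sidx N hsidxcard hN
            B m hm0 hm1 hlawB ε hε0 hbern
        have hsubB : ({ω | ε < Z' ω} ∩ Gp) ⊆
            ⋃ B ∈ K.powerset, {ω | (N:ℝ) * ((∑ x ∈ B, P p.1 p.2 x) + ε / 2)
              ≤ ∑ z ∈ sidx, (if X z.1 z.2 ω ∈ B then (1:ℝ) else 0)} := by
          rintro ω ⟨hωZ, hωG⟩
          set Emp : S → ℝ := fun x => (N:ℝ)⁻¹ * ∑ i, (if X p i ω = x then (1:ℝ) else 0)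
            with hEmpdef
          set B : Finset S := K.filter (fun x => P p.1 p.2 x < Emp x) with hBdef
          have hBsub : B ⊆ K := by rw [hBdef]; exact Finset.filter_subset _ _
          refine Set.mem_biUnion (Finset.mem_powerset.mpr hBsub) ?_
          have hsumemp : ∑ x ∈ K, Emp x = 1 := by
            rw [hEmpdef]
            simp only
            rw [← Finset.mul_sum, Finset.sum_comm]
            have hinner : ∀ i : Fin N, ∑ x ∈ K, (if X p i ω = x then (1:ℝ) else 0) = 1 := by
              intro i
              rw [Finset.sum_ite_eq K (X p i ω) (fun _ => (1:ℝ)), if_pos (hωG i)]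
            rw [Finset.sum_congr rfl (fun i _ => hinner i), Finset.sum_const,
              Finset.card_univ, Fintype.card_fin, nsmul_eq_mul, mul_one,
              inv_mul_cancel₀ (ne_of_gt hNpos)]
          have hDsum : ∑ x ∈ K, (Emp x - P p.1 p.2 x) = 0 := by
            rw [Finset.sum_sub_distrib, hsumemp, hqsumK, sub_self]
          have habs : ∑ x ∈ K, |P p.1 p.2 x - Emp x| = 2 * ∑ x ∈ B, (Emp x - P p.1 p.2 x) := by
            have hsplit := Finset.sum_filter_add_sum_filter_not K
              (fun x => P p.1 p.2 x < Emp x) (fun x => |P p.1 p.2 x - Emp x|)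
            have hsplit2 := Finset.sum_filter_add_sum_filter_not K
              (fun x => P p.1 p.2 x < Emp x) (fun x => Emp x - P p.1 p.2 x)
            have h1 : ∑ x ∈ B, |P p.1 p.2 x - Emp x| = ∑ x ∈ B, (Emp x - P p.1 p.2 x) := by
              apply Finset.sum_congr rfl
              intro x hx
              rw [hBdef, Finset.mem_filter] at hx
              rw [abs_of_neg (by linarith [hx.2]), neg_sub]
            have h2 : ∑ x ∈ K.filter (fun x => ¬ P p.1 p.2 x < Emp x), |P p.1 p.2 x - Emp x|
                = ∑ x ∈ K.filter (fun x => ¬ P p.1 p.2 x < Emp x), (P p.1 p.2 x - Emp x) := by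
              apply Finset.sum_congr rfl
              intro x hx
              rw [Finset.mem_filter] at hx
              rw [abs_of_nonneg (by linarith [not_lt.mp hx.2])]
            have h4 : ∑ x ∈ K.filter (fun x => ¬ P p.1 p.2 x < Emp x), (P p.1 p.2 x - Emp x)
                = -∑ x ∈ K.filter (fun x => ¬ P p.1 p.2 x < Emp x), (Emp x - P p.1 p.2 x) := by
              rw [← Finset.sum_neg_distrib]
              apply Finset.sum_congr rfl
              intro x _
              ring
            have h5 : ∑ x ∈ B, (Emp x - P p.1 p.2 x)
                + ∑ x ∈ K.filter (fun x => ¬ P p.1 p.2 x < Emp x), (Emp x - P p.1 p.2 x)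
                = 0 := by
              rw [hBdef, hsplit2]
              exact hDsum
            rw [← hsplit, h1, h2, h4]
            linarith
          have hZval : ε < ∑ x ∈ K, |P p.1 p.2 x - Emp x| := hωZ
          have hhalf : ε / 2 < ∑ x ∈ B, (Emp x - P p.1 p.2 x) := by
            rw [habs] at hZval
            linarith
          show (N:ℝ) * ((∑ x ∈ B, P p.1 p.2 x) + ε / 2)
              ≤ ∑ z ∈ sidx, (if X z.1 z.2 ω ∈ B then (1:ℝ) else 0)
          have hsumB : ∑ z ∈ sidx, (if X z.1 z.2 ω ∈ B then (1:ℝ) else 0)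
              = ∑ i : Fin N, (if X p i ω ∈ B then (1:ℝ) else 0) := by
            rw [hsidxdef, Finset.sum_product, Finset.sum_singleton]
          have hempB : ∑ x ∈ B, Emp x
              = (N:ℝ)⁻¹ * ∑ i : Fin N, (if X p i ω ∈ B then (1:ℝ) else 0) := by
            rw [hEmpdef]
            simp only
            rw [← Finset.mul_sum, Finset.sum_comm]
            congr 1
            apply Finset.sum_congr rfl
            intro i _
            rw [Finset.sum_ite_eq B (X p i ω) (fun _ => (1:ℝ))]
          have h5 : (∑ x ∈ B, P p.1 p.2 x) + ε / 2 ≤ ∑ x ∈ B, Emp x := by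
            rw [Finset.sum_sub_distrib] at hhalf
            linarith
          rw [hsumB]
          calc (N:ℝ) * ((∑ x ∈ B, P p.1 p.2 x) + ε / 2) ≤ N * ∑ x ∈ B, Emp x :=
                mul_le_mul_of_nonneg_left h5 hNpos.le
            _ = ∑ i : Fin N, (if X p i ω ∈ B then (1:ℝ) else 0) := by
                rw [hempB, ← mul_assoc, mul_inv_cancel₀ (ne_of_gt hNpos), one_mul]
        calc ℙ ({ω | ε < Z' ω} ∩ Gp)
            ≤ ℙ (⋃ B ∈ K.powerset, {ω | (N:ℝ) * ((∑ x ∈ B, P p.1 p.2 x) + ε / 2)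
              ≤ ∑ z ∈ sidx, (if X z.1 z.2 ω ∈ B then (1:ℝ) else 0)}) :=
              measure_mono hsubB
          _ ≤ ∑ B ∈ K.powerset, ℙ {ω | (N:ℝ) * ((∑ x ∈ B, P p.1 p.2 x) + ε / 2)
              ≤ ∑ z ∈ sidx, (if X z.1 z.2 ω ∈ B then (1:ℝ) else 0)} :=
              measure_biUnion_finset_le _ _
          _ ≤ ∑ _B ∈ K.powerset, ENNReal.ofReal (Real.exp (-(N:ℝ) * ε ^ 2 / 2)) :=
              Finset.sum_le_sum fun B hB => hEB B (Finset.mem_powerset.mp hB)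
          _ = (2 ^ K.card : ℕ) • ENNReal.ofReal (Real.exp (-(N:ℝ) * ε ^ 2 / 2)) := by
              rw [Finset.sum_const, Finset.card_powerset]
          _ ≤ ENNReal.ofReal (δ / Ω'.card) := by
              rw [nsmul_eq_mul, ← ENNReal.ofReal_natCast,
                ← ENNReal.ofReal_mul (Nat.cast_nonneg _)]
              apply ENNReal.ofReal_le_ofReal
              push_cast
              rw [← hexpL]
              have h2k : (2:ℝ) ^ K.card = Real.exp (K.card * Real.log 2) := by
                rw [Real.exp_nat_mul, Real.exp_log two_pos]
              have hdiv : -(N:ℝ) * ε ^ 2 / 2 = -((N:ℝ) * ε ^ 2) / 2 := by ring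
              rw [h2k, ← Real.exp_add, hdiv]
              apply Real.exp_le_exp.mpr
              have hk2R : (2:ℝ) ≤ K.card := by exact_mod_cast hk2
              exact arith_hoef_final htLpos htL2 hLbig hk2R hNe2
  -- assemble
  set Egood : Set Ωm :=
    {ω | ∀ p ∈ Ω', (∑ s', |P p.1 p.2 s' - Phat ω p.1 p.2 s'|) ≤ ε} with hEgooddef
  have hEgoodc : ℙ Egoodᶜ ≤ ENNReal.ofReal δ := by
    have hsub : Egoodᶜ ⊆
        ⋃ p ∈ Ω', {ω | ε < ∑ s', |P p.1 p.2 s' - Phat ω p.1 p.2 s'|} := by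
      intro ω hω
      simp only [hEgooddef, Set.mem_compl_iff, Set.mem_setOf_eq, not_forall] at hω
      obtain ⟨p, hp, hgt⟩ := hω
      exact Set.mem_biUnion hp (not_le.mp hgt)
    calc ℙ Egoodᶜ
        ≤ ∑ p ∈ Ω', ℙ {ω | ε < ∑ s', |P p.1 p.2 s' - Phat ω p.1 p.2 s'|} :=
          (measure_mono hsub).trans (measure_biUnion_finset_le _ _)
      _ ≤ ∑ _p ∈ Ω', ENNReal.ofReal (δ / Ω'.card) := Finset.sum_le_sum hper
      _ = Ω'.card • ENNReal.ofReal (δ / Ω'.card) := Finset.sum_const _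
      _ = ENNReal.ofReal δ := by
          rw [nsmul_eq_mul, ← ENNReal.ofReal_natCast, ← ENNReal.ofReal_mul (Nat.cast_nonneg _)]
          congr 1
          field_simp
  have hsubgood : Egood ⊆ {ω |
      (∑ s, ∑ a, visit γ P piE η s a * ∑ s', |P s a s' - Phat ω s a s'|) ≤ ε ∧
      ∀ θ, |discSum γ P piE η (fun s a => Real.log (softmax (Q ω θ) s a)) -
          (discSum γ P piE η (fun s a => r s a θ + U s a) - ∑ s, η s * lse (Q ω θ) s)| ≤
        γ * ((Cr + Cu + Real.log (Fintype.card A)) / (1 - γ)) * ε / (1 - γ)} := by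
    intro ω hω
    have hω' : ∀ p ∈ Ω', (∑ s', |P p.1 p.2 s' - Phat ω p.1 p.2 s'|) ≤ ε := hω
    have hcond1 : ∑ s, ∑ a, visit γ P piE η s a * ∑ s', |P s a s' - Phat ω s a s'| ≤ ε := by
      calc ∑ s, ∑ a, visit γ P piE η s a * ∑ s', |P s a s' - Phat ω s a s'|
          ≤ ∑ s, ∑ a, visit γ P piE η s a * ε := by
            apply Finset.sum_le_sum
            intro s _
            apply Finset.sum_le_sum
            intro a _
            by_cases hmem : (s, a) ∈ Ω'
            · exact mul_le_mul_of_nonneg_left (hω' (s, a) hmem) (hvnn s a)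
            · have hv0 : visit γ P piE η s a = 0 := by
                by_contra hne
                refine hmem ?_
                rw [hΩ'def, expertPairs, Finset.mem_filter]
                exact ⟨Finset.mem_univ _, lt_of_le_of_ne (hvnn s a) (Ne.symm hne)⟩
              rw [hv0, zero_mul, zero_mul]
        _ = ε := by
            have hfold : ∑ s, ∑ a, visit γ P piE η s a * ε
                = (∑ s, ∑ a, visit γ P piE η s a) * ε := by
              simp only [Finset.sum_mul]
            rw [hfold, hvsum, one_mul]
    refine ⟨hcond1, fun θ => ?_⟩
    exact det_part hγm hP hpiE hη (Phat ω) (hPhatK ω) (fun s a => r s a θ + U s a)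
      (CR := Cr + Cu) (fun s a => (abs_add_le _ _).trans (add_le_add (hr s a θ) (hU s a)))
      (Q ω θ) (hQ ω θ) hcond1
  have h1le : (1:ENNReal) ≤ ℙ {ω |
      (∑ s, ∑ a, visit γ P piE η s a * ∑ s', |P s a s' - Phat ω s a s'|) ≤ ε ∧
      ∀ θ, |discSum γ P piE η (fun s a => Real.log (softmax (Q ω θ) s a)) -
          (discSum γ P piE η (fun s a => r s a θ + U s a) - ∑ s, η s * lse (Q ω θ) s)| ≤
        γ * ((Cr + Cu + Real.log (Fintype.card A)) / (1 - γ)) * ε / (1 - γ)} + ℙ Egoodᶜ := by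
    calc (1:ENNReal) = ℙ (Set.univ : Set Ωm) := measure_univ.symm
      _ = ℙ (Egood ∪ Egoodᶜ) := by rw [Set.union_compl_self]
      _ ≤ ℙ Egood + ℙ Egoodᶜ := measure_union_le _ _
      _ ≤ _ + ℙ Egoodᶜ := add_le_add_left (measure_mono hsubgood) _
  calc ENNReal.ofReal (1 - δ) = 1 - ENNReal.ofReal δ := by
        rw [ENNReal.ofReal_sub 1 hδ0.le, ENNReal.ofReal_one]
    _ ≤ 1 - ℙ Egoodᶜ := tsub_le_tsub_left hEgoodc 1
    _ ≤ _ := by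
        rw [tsub_le_iff_right]
        exact h1le
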